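/- Let K be a field, R a unital amenable affine K-algebra with a fixed Følner exhaustion {W_n}, ω a nonprincipal ultrafilter on ℕ. Let 0 → M → N → N/M → 0 be an exact sequence of finitely generated left R-modules (M a submodule of N), and let X = {x_1, …, x_r} be a system of generators for N containing a system of generators for M. Define the relative rank rank_X(M) = lim_ω dim_K(M ∩ (W_nx_1 + ⋯ + W_nx_r))/dim_K(W_n). Then rank(N) = rank(N/M) + rank_X(M). -/

import Mathlib

open Filter Module

/-- `W·r`: the image of the finite dimensional subspace `W` under right multiplication
by `r`. -/
noncomputable def rightMulSubmodule (K : Type*) [Field K] {R : Type*} [Ring R] [Algebra K R]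
    (W : Submodule K R) (r : R) : Submodule K R :=
  W.map (LinearMap.mulRight K r)

/-- A Følner exhaustion of a `K`-algebra `R`: an increasing sequence of finite dimensional
subspaces exhausting `R` such that for every `r ∈ R`,
`dim (Wₙ·r + Wₙ) / dim Wₙ → 1`. -/
def FolnerExhaustion (K : Type*) [Field K] (R : Type*) [Ring R] [Algebra K R]
    (W : ℕ → Submodule K R) : Prop :=
  Monotone W ∧ (∀ n, FiniteDimensional K (W n)) ∧ (∀ x : R, ∃ n, x ∈ W n) ∧
    ∀ r : R,
      Tendsto (fun n => (finrank K ↥(rightMulSubmodule K (W n) r ⊔ W n) : ℝ) / finrank K (W n))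
        atTop (nhds 1)

/-- An affine algebra is (left) amenable if it admits a Følner exhaustion. -/
def AmenableAlgebra (K : Type*) [Field K] (R : Type*) [Ring R] [Algebra K R] : Prop :=
  ∃ W : ℕ → Submodule K R, FolnerExhaustion K R W


/-- The ultralimit of a real sequence along an ultrafilter `ω`: the limit of the sequence
along `ω` (for bounded sequences this limit exists and is unique). -/
noncomputable def ultralim (ω : Ultrafilter ℕ) (f : ℕ → ℝ) : ℝ :=
  limUnder (ω : Filter ℕ) f

/-- The sequence `n ↦ dim_K(Wₙx₁ + ⋯ + Wₙx_r) / dim_K(Wₙ)` attached to a family of elements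
`x₁, …, x_r` of a left `R`-module `M`, where `Wₙ·x = {wx : w ∈ Wₙ}`. -/
noncomputable def rankSeq (K : Type*) [Field K] (R : Type*) [Ring R] [Algebra K R]
    (W : ℕ → Submodule K R) {M : Type*} [AddCommGroup M] [Module K M] [Module R M]
    [IsScalarTower K R M] {r : ℕ} (x : Fin r → M) (n : ℕ) : ℝ :=
  (finrank K ↥(⨆ i, (W n).map ((LinearMap.toSpanSingleton R M (x i)).restrictScalars K)) : ℝ) /
    finrank K (W n)


/-!
Put `Vₙ = Wₙx₁ + ⋯ + Wₙx_r`. The quotient map `N → N/M` sends `Vₙ` onto `Wₙx̄₁ + ⋯ + Wₙx̄_r`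
with kernel `M ∩ Vₙ`, so by rank–nullity every term of the sequence computing `rank N` is
exactly the sum of the corresponding terms for `rank (N/M)` and `rank_X M`. All three sequences
take values in `[0, r]`, so their limits along the ultrafilter exist and add up.
-/

open Set Topology

section FiniteDimensional

variable {K V V₂ : Type*} [Field K] [AddCommGroup V] [Module K V] [AddCommGroup V₂] [Module K V₂]

theorem Submodule.finrank_map_add_finrank_inf_ker (p : Submodule K V) [FiniteDimensional K p]
    (f : V →ₗ[K] V₂) : finrank K ↥(p.map f) + finrank K ↥(p ⊓ LinearMap.ker f) = finrank K p := by
  have h := LinearMap.finrank_range_add_finrank_ker (f.domRestrict p)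
  rwa [LinearMap.range_domRestrict, LinearMap.ker_domRestrict,
    ← Submodule.finrank_map_subtype_eq, Submodule.map_comap_subtype] at h

theorem Submodule.finrank_iSup_le_sum {ι : Type*} [Fintype ι] (p : ι → Submodule K V)
    [∀ i, FiniteDimensional K (p i)] : finrank K ↥(⨆ i, p i) ≤ ∑ i, finrank K (p i) := by
  classical
  rw [← Finset.sup_univ_eq_iSup]
  induction (Finset.univ : Finset ι) using Finset.induction with
  | empty => simp
  | insert a s ha ih =>
    rw [Finset.sup_insert, Finset.sum_insert ha]
    exact (Submodule.finrank_add_le_finrank_add_finrank _ _).trans (by omega)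

end FiniteDimensional

section SmulSpan

variable (K : Type*) [Field K] {R : Type*} [Ring R] [Algebra K R]
  {N : Type*} [AddCommGroup N] [Module K N] [Module R N] [IsScalarTower K R N]
  {ι : Type*} (W : Submodule K R) (x : ι → N)

/-- The subspace `W x₁ + ⋯ + W x_r` of `N`. -/
noncomputable def smulSpan : Submodule K N :=
  ⨆ i, W.map ((LinearMap.toSpanSingleton R N (x i)).restrictScalars K)

instance [Finite ι] [FiniteDimensional K W] : FiniteDimensional K (smulSpan K W x) := by
  unfold smulSpan
  infer_instance

theorem finrank_smulSpan_le [Fintype ι] [FiniteDimensional K W] :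
    finrank K (smulSpan K W x) ≤ Fintype.card ι * finrank K W :=
  calc finrank K (smulSpan K W x)
      ≤ ∑ i, finrank K ↥(W.map ((LinearMap.toSpanSingleton R N (x i)).restrictScalars K)) :=
        Submodule.finrank_iSup_le_sum _
    _ ≤ ∑ _i : ι, finrank K W := Finset.sum_le_sum fun _ _ => Submodule.finrank_map_le _ _
    _ = Fintype.card ι * finrank K W := by rw [Finset.sum_const, smul_eq_mul, Finset.card_univ]

theorem map_smulSpan {P : Type*} [AddCommGroup P] [Module K P] [Module R P] [IsScalarTower K R P]
    (f : N →ₗ[R] P) : (smulSpan K W x).map (f.restrictScalars K) = smulSpan K W (f ∘ x) := by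
  simp only [smulSpan, Submodule.map_iSup, ← Submodule.map_comp]
  congr! 2
  ext w
  simp [LinearMap.toSpanSingleton_apply]

theorem finrank_smulSpan_eq_add_finrank_inf [Finite ι] [FiniteDimensional K W]
    (M : Submodule R N) :
    finrank K (smulSpan K W x) =
      finrank K (smulSpan K W (M.mkQ ∘ x)) + finrank K ↥(M.restrictScalars K ⊓ smulSpan K W x) := by
  have h := Submodule.finrank_map_add_finrank_inf_ker (smulSpan K W x) (M.mkQ.restrictScalars K)
  rw [map_smulSpan, LinearMap.ker_restrictScalars, Submodule.ker_mkQ, inf_comm] at h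
  exact h.symm

end SmulSpan

theorem natCast_div_mem_Icc {u d r : ℕ} (h : u ≤ r * d) : (u / d : ℝ) ∈ Icc 0 (r : ℝ) := by
  refine ⟨by positivity, ?_⟩
  rcases Nat.eq_zero_or_pos d with rfl | hd
  · simp
  · rw [div_le_iff₀ (by exact_mod_cast hd)]
    exact_mod_cast h

theorem rankSeq_mem_Icc (K : Type*) [Field K] (R : Type*) [Ring R] [Algebra K R]
    (W : ℕ → Submodule K R) [∀ n, FiniteDimensional K (W n)]
    {N : Type*} [AddCommGroup N] [Module K N] [Module R N] [IsScalarTower K R N]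
    {r : ℕ} (x : Fin r → N) (n : ℕ) : rankSeq K R W x n ∈ Icc 0 (r : ℝ) :=
  natCast_div_mem_Icc <| (finrank_smulSpan_le K (W n) x).trans_eq <| by rw [Fintype.card_fin]

section Ultralim

variable {ω : Ultrafilter ℕ} {f g : ℕ → ℝ} {a b c d : ℝ}

theorem tendsto_ultralim (hf : ∀ n, f n ∈ Icc a b) : Tendsto f ω (𝓝 (ultralim ω f)) := by
  have hmap : ↑(ω.map f) ≤ 𝓟 (Icc a b) := by
    rw [Ultrafilter.coe_map, le_principal_iff]
    exact mem_map.2 (univ_mem' hf)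
  obtain ⟨l, -, hl⟩ := isCompact_Icc.ultrafilter_le_nhds (ω.map f) hmap
  exact tendsto_nhds_limUnder ⟨l, hl⟩

theorem ultralim_add (hf : ∀ n, f n ∈ Icc a b) (hg : ∀ n, g n ∈ Icc c d) :
    ultralim ω (f + g) = ultralim ω f + ultralim ω g :=
  ((tendsto_ultralim hf).add (tendsto_ultralim hg)).limUnder_eq

end Ultralim

theorem rank_exact_sequence_general (K : Type*) [Field K] (R : Type*) [Ring R] [Algebra K R]
    (W : ℕ → Submodule K R) (hW : FolnerExhaustion K R W)
    (ω : Ultrafilter ℕ)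
    (N : Type*) [AddCommGroup N] [Module K N] [Module R N] [IsScalarTower K R N]
    (M : Submodule R N) {r : ℕ} (x : Fin r → N) :
    ultralim ω (rankSeq K R W x) =
      ultralim ω (rankSeq K R W fun i => M.mkQ (x i)) +
      ultralim ω (fun n =>
        (finrank K ↥(M.restrictScalars K ⊓
          ⨆ i, (W n).map ((LinearMap.toSpanSingleton R N (x i)).restrictScalars K)) : ℝ) /
          finrank K (W n)) := by
  have := hW.2.1
  set relSeq : ℕ → ℝ := fun n =>
    (finrank K ↥(M.restrictScalars K ⊓ smulSpan K (W n) x) : ℝ) / finrank K (W n)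
  have hsplit : rankSeq K R W x = rankSeq K R W (fun i => M.mkQ (x i)) + relSeq := by
    ext n
    simp only [rankSeq, relSeq, Pi.add_apply, ← add_div]
    exact_mod_cast congrArg (fun k : ℕ => (k : ℝ) / finrank K (W n))
      (finrank_smulSpan_eq_add_finrank_inf K (W n) x M)
  have hrel (n : ℕ) : relSeq n ∈ Icc 0 (r : ℝ) :=
    natCast_div_mem_Icc <| (Submodule.finrank_mono inf_le_right).trans <|
      (finrank_smulSpan_le K (W n) x).trans_eq <| by rw [Fintype.card_fin]
  rw [hsplit, ultralim_add (rankSeq_mem_Icc K R W _) hrel]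
  rfl

/-- For an exact sequence `0 → M → N → N/M → 0` of finitely generated modules, with a
generating system `X = {x₁, …, x_r}` of `N` containing a generating system of `M`,
`rank N = rank (N/M) + rank_X M`, where
`rank_X M = lim_ω dim_K (M ∩ (Wₙx₁ + ⋯ + Wₙx_r)) / dim_K Wₙ` is the relative rank. -/
theorem rank_exact_sequence (K : Type*) [Field K] (R : Type*) [Ring R] [Algebra K R]
    [Algebra.FiniteType K R]
    (W : ℕ → Submodule K R) (hW : FolnerExhaustion K R W)
    (ω : Ultrafilter ℕ) (hω : (ω : Filter ℕ) ≤ Filter.cofinite)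
    (N : Type*) [AddCommGroup N] [Module K N] [Module R N] [IsScalarTower K R N]
    (M : Submodule R N) {r : ℕ} (x : Fin r → N)
    (hx : Submodule.span R (Set.range x) = ⊤)
    (s : Set (Fin r)) (hsM : ∀ i ∈ s, x i ∈ M)
    (hsgen : Submodule.span R (x '' s) = M) :
    ultralim ω (rankSeq K R W x) =
      ultralim ω (rankSeq K R W fun i => M.mkQ (x i)) +
      ultralim ω (fun n =>
        (finrank K ↥(M.restrictScalars K ⊓
          ⨆ i, (W n).map ((LinearMap.toSpanSingleton R N (x i)).restrictScalars K)) : ℝ) /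
          finrank K (W n)) :=
  rank_exact_sequence_general K R W hW ω N M x
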